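/- Let M be a von Neumann algebra and let a, b ∈ M with 0 ≤ a, b ≤ 1 be absolutely compatible. Then the range projection p₁ of a∘b commutes with a + b, i.e., p₁(a+b) = (a+b)p₁. -/

import Mathlib

/-!
Write `s = a + b`, `d = a - b`, `e = 1 - s`. Absolute compatibility says `|d| = 1 - |e|`;
squaring gives `d² = 1 - 2|e| + e²`, and `e` commutes with `|e|`, so `e`, hence `s`, commutes
with `d²`. As `s² - d² = 2(ab + ba)`, `s` commutes with `x = a ∘ b`.

The range projection of `x` is the orthogonal projection onto the closure of the range of `x`
(which lies in `M` by the bicommutant theorem). That closed subspace is invariant under every `y`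
such that `y` and `y*` commute with `x`, so its projection commutes with such `y`, e.g. `y = s`.
-/

variable {H : Type*} [NormedAddCommGroup H] [InnerProductSpace ℂ H] [CompleteSpace H]

/-- The absolute value `|x| = (x* x)^(1/2)` of a bounded operator. -/
noncomputable def opAbs (x : H →L[ℂ] H) : H →L[ℂ] H := CFC.sqrt (star x * x)

/-- `p` is the range projection of `x` in the von Neumann algebra `M`: the smallest
projection in `M` satisfying `p x = x`. -/
def IsRangeProjection (M : VonNeumannAlgebra H) (p x : H →L[ℂ] H) : Prop :=
  p ∈ M ∧ IsIdempotentElem p ∧ IsSelfAdjoint p ∧ p * x = x ∧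
    ∀ q : H →L[ℂ] H, q ∈ M → IsIdempotentElem q → IsSelfAdjoint q → q * x = x → p ≤ q

theorem commute_mul_self_of_add_eq_one {R : Type*} [Ring R] {u v d e : R} (huv : u + v = 1)
    (hu : u * u = d * d) (hv : v * v = e * e) (hev : Commute e v) : Commute e (d * d) := by
  have hdd : d * d = 1 - (v + v) + e * e := by
    rw [← hu, ← hv, eq_sub_of_add_eq huv]
    noncomm_ring
  rw [hdd]
  exact ((Commute.one_right e).sub_right (hev.add_right hev)).add_right
    ((Commute.refl e).mul_right (Commute.refl e))

theorem commute_add_jordan_of_commute_one_sub {𝕜 R : Type*} [Field 𝕜] [CharZero 𝕜] [Ring R]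
    [Algebra 𝕜 R] {a b : R} (h : Commute (1 - a - b) ((a - b) * (a - b))) :
    Commute (a + b) ((2 : 𝕜)⁻¹ • (a * b + b * a)) := by
  have hsum : Commute (a + b) ((a - b) * (a - b)) := by
    simpa only [sub_sub, sub_sub_cancel] using (Commute.one_left ((a - b) * (a - b))).sub_left h
  have hjordan : a * b + b * a = (2 : 𝕜)⁻¹ • ((a + b) * (a + b) - (a - b) * (a - b)) := by
    rw [show (a + b) * (a + b) - (a - b) * (a - b) = (2 : 𝕜) • (a * b + b * a) by
      rw [two_smul]; noncomm_ring, inv_smul_smul₀ two_ne_zero]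
  rw [hjordan]
  exact ((((Commute.refl _).mul_right (Commute.refl _)).sub_right hsum).smul_right _).smul_right _

theorem opAbs_eq_cfcAbs (x : H →L[ℂ] H) : opAbs x = CFC.abs x := rfl

theorem opAbs_mul_opAbs {x : H →L[ℂ] H} (hx : IsSelfAdjoint x) : opAbs x * opAbs x = x * x := by
  rw [opAbs_eq_cfcAbs, CFC.abs_mul_abs, hx.star_eq]

theorem commute_opAbs {x : H →L[ℂ] H} (hx : IsSelfAdjoint x) : Commute x (opAbs x) := by
  rw [opAbs_eq_cfcAbs]
  exact (CFC.commute_abs_self x hx.isStarNormal).symm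

theorem commute_add_jordan_of_opAbs_add_eq_one {a b : H →L[ℂ] H} (ha : IsSelfAdjoint a)
    (hb : IsSelfAdjoint b) (hAC : opAbs (a - b) + opAbs (1 - a - b) = 1) :
    Commute (a + b) ((2 : ℂ)⁻¹ • (a * b + b * a)) :=
  have he : IsSelfAdjoint (1 - a - b) := ((IsSelfAdjoint.one _).sub ha).sub hb
  commute_add_jordan_of_commute_one_sub <| commute_mul_self_of_add_eq_one hAC
    (opAbs_mul_opAbs (ha.sub hb)) (opAbs_mul_opAbs he) (commute_opAbs he)

theorem IsStarProjection.commute_of_mul_mul_eq {R : Type*} [Semigroup R] [StarMul R] {p y : R}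
    (hp : IsStarProjection p) (hy : p * y * p = y * p) (hy' : p * star y * p = star y * p) :
    Commute p y := by
  have h : p * y * p = p * y := by
    simpa only [star_mul, star_star, hp.isSelfAdjoint.star_eq, mul_assoc] using congr(star $hy')
  exact h.symm.trans hy

theorem Commute.range_topologicalClosure_mem_invtSubmodule {R M : Type*} [Semiring R]
    [TopologicalSpace R] [TopologicalSpace M] [AddCommMonoid M] [Module R M] [ContinuousSMul R M]
    [ContinuousAdd M] {x y : M →L[R] M} (h : Commute y x) :
    (LinearMap.range (x : M →ₗ[R] M)).topologicalClosure ∈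
      Module.End.invtSubmodule (y : M →ₗ[R] M) := by
  rw [Module.End.mem_invtSubmodule_iff_map_le]
  refine (Submodule.topologicalClosure_map y _).trans (Submodule.topologicalClosure_mono ?_)
  rintro _ ⟨_, ⟨w, rfl⟩, rfl⟩
  exact ⟨y w, congr($h.symm w)⟩

theorem Commute.commute_starProjection_range_topologicalClosure {𝕜 E : Type*} [RCLike 𝕜]
    [NormedAddCommGroup E] [InnerProductSpace 𝕜 E] [CompleteSpace E] {x y : E →L[𝕜] E}
    (h : Commute y x) (h' : Commute (star y) x) :
    Commute (LinearMap.range (x : E →ₗ[𝕜] E)).topologicalClosure.starProjection y := by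
  set K := (LinearMap.range (x : E →ₗ[𝕜] E)).topologicalClosure
  have hconj (z : E →L[𝕜] E) (hz : Commute z x) :
      K.starProjection * z * K.starProjection = z * K.starProjection := by
    have hK : (LinearMap.range (K.starProjection : E →ₗ[𝕜] E)) ∈
        Module.End.invtSubmodule (z : E →ₗ[𝕜] E) := by
      rw [Submodule.range_starProjection]
      exact hz.range_topologicalClosure_mem_invtSubmodule
    rw [mul_assoc]
    exact ContinuousLinearMap.IsIdempotentElem.conj_eq_of_range_mem_invtSubmodule
      K.isIdempotentElem_starProjection hK
  exact isStarProjection_starProjection.commute_of_mul_mul_eq (hconj y h) (hconj _ h')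

namespace VonNeumannAlgebra

theorem starProjection_range_topologicalClosure_mem {M : VonNeumannAlgebra H} {x : H →L[ℂ] H}
    (hx : x ∈ M) : (LinearMap.range (x : H →ₗ[ℂ] H)).topologicalClosure.starProjection ∈ M := by
  rw [← M.commutant_commutant, mem_commutant_iff]
  intro g hg
  have hgx : Commute g x := (mem_commutant_iff.mp hg x hx).symm
  have hgx' : Commute (star g) x := (mem_commutant_iff.mp (star_mem hg) x hx).symm
  exact (hgx.commute_starProjection_range_topologicalClosure hgx').eq.symm

end VonNeumannAlgebra

theorem IsRangeProjection.eq_starProjection {M : VonNeumannAlgebra H} {p x : H →L[ℂ] H}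
    (hp : IsRangeProjection M p x) (hx : x ∈ M) :
    p = (LinearMap.range (x : H →ₗ[ℂ] H)).topologicalClosure.starProjection := by
  obtain ⟨-, hpi, hps, hpx, hmin⟩ := hp
  set K := (LinearMap.range (x : H →ₗ[ℂ] H)).topologicalClosure
  have hrange : LinearMap.range (x : H →ₗ[ℂ] H) ≤ K := Submodule.le_topologicalClosure _
  have hKx : K.starProjection * x = x := by
    ext w
    exact Submodule.starProjection_eq_self_iff.mpr (hrange ⟨w, rfl⟩)
  refine le_antisymm (hmin _ (M.starProjection_range_topologicalClosure_mem hx)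
    K.isIdempotentElem_starProjection (isSelfAdjoint_starProjection K) hKx) ?_
  obtain ⟨_, hp_eq⟩ := isStarProjection_iff_eq_starProjection_range.mp ⟨hpi, hps⟩
  rw [hp_eq, Submodule.starProjection_le_starProjection_iff]
  refine Submodule.topologicalClosure_minimal _ ?_
    (ContinuousLinearMap.IsIdempotentElem.isClosed_range hpi)
  rintro _ ⟨w, rfl⟩
  exact ⟨x w, congr($hpx w)⟩

theorem IsRangeProjection.commute {M : VonNeumannAlgebra H} {p x y : H →L[ℂ] H}
    (hp : IsRangeProjection M p x) (hx : x ∈ M) (h : Commute y x) (h' : Commute (star y) x) :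
    Commute p y :=
  hp.eq_starProjection hx ▸ h.commute_starProjection_range_topologicalClosure h'

theorem stmt5_general (M : VonNeumannAlgebra H) (a b p₁ : H →L[ℂ] H)
    (haM : a ∈ M) (hbM : b ∈ M)
    (ha0 : 0 ≤ a) (hb0 : 0 ≤ b)
    (hAC : opAbs (a - b) + opAbs (1 - a - b) = 1)
    (hp₁ : IsRangeProjection M p₁ ((2 : ℂ)⁻¹ • (a * b + b * a))) :
    p₁ * (a + b) = (a + b) * p₁ := by
  have ha : IsSelfAdjoint a := .of_nonneg ha0
  have hb : IsSelfAdjoint b := .of_nonneg hb0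
  have hcomm := commute_add_jordan_of_opAbs_add_eq_one ha hb hAC
  have hxM : (2 : ℂ)⁻¹ • (a * b + b * a) ∈ M :=
    M.smul_mem (add_mem (mul_mem haM hbM) (mul_mem hbM haM)) _
  exact (hp₁.commute hxM hcomm (by rwa [(ha.add hb).star_eq])).eq

/-- If `0 ≤ a, b ≤ 1` are absolutely compatible elements of a von Neumann algebra, then the
range projection of `a ∘ b` commutes with `a + b`. -/
theorem stmt5 (M : VonNeumannAlgebra H) (a b p₁ : H →L[ℂ] H)
    (haM : a ∈ M) (hbM : b ∈ M)
    (ha0 : 0 ≤ a) (ha1 : a ≤ 1) (hb0 : 0 ≤ b) (hb1 : b ≤ 1)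
    (hAC : opAbs (a - b) + opAbs (1 - a - b) = 1)
    (hp₁ : IsRangeProjection M p₁ ((2 : ℂ)⁻¹ • (a * b + b * a))) :
    p₁ * (a + b) = (a + b) * p₁ :=
  stmt5_general M a b p₁ haM hbM ha0 hb0 hAC hp₁
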